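/- Let G be a finite group and N a normal subgroup of G. Let w be a word in d variables, and for a finite group H let Π_w(H) denote the maximal fiber size of the word map w_H : H^d → H. For subgroups N ≤ G and elements g₁,…,g_d ∈ G define the coset word maps N^d → G by (n₁,…,n_d) ↦ w(n₁g₁,…,n_d g_d), and let Γ_w(N,G) be the maximum fiber size over all such maps. Then Π_w(G) ≤ Π_w(G/N) · Γ_w(N,G). -/

import Mathlib

open Classical in
private lemma lift_comp {α G H : Type*} [Group G] [Group H] (φ : G →* H) (f : α → G)
    (w : FreeGroup α) : FreeGroup.lift (fun i => φ (f i)) w = φ (FreeGroup.lift f w) :=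
  (FreeGroup.lift_unique (φ.comp (FreeGroup.lift f)) (fun x => by simp)).symm

open Classical in
theorem stmt_6 {G : Type*} [Group G] [Fintype G] {d : ℕ}
    (N : Subgroup G) [N.Normal] (w : FreeGroup (Fin d)) :
    (⨆ c : G, Nat.card {f : Fin d → G // FreeGroup.lift f w = c}) ≤
      (⨆ c : G ⧸ N, Nat.card {f : Fin d → G ⧸ N // FreeGroup.lift f w = c}) *
        (⨆ g : Fin d → G, ⨆ c : G,
          Nat.card {s : Fin d → N // FreeGroup.lift (fun i => (s i : G) * g i) w = c}) := by
  set Γ := (⨆ g : Fin d → G, ⨆ c : G,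
      Nat.card {s : Fin d → N // FreeGroup.lift (fun i => (s i : G) * g i) w = c}) with hΓ
  set Pi2 := (⨆ c : G ⧸ N, Nat.card {f : Fin d → G ⧸ N // FreeGroup.lift f w = c}) with hPi2
  apply ciSup_le
  intro c
  -- fiber over c, decomposed along the quotient map
  set φ : G →* G ⧸ N := QuotientGroup.mk' N
  have hbddΓin : ∀ g : Fin d → G, BddAbove (Set.range fun c : G =>
      Nat.card {s : Fin d → N // FreeGroup.lift (fun i => (s i : G) * g i) w = c}) :=
    fun g => (Set.finite_range _).bddAbove
  have hΓle : ∀ (g : Fin d → G) (c : G),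
      Nat.card {s : Fin d → N // FreeGroup.lift (fun i => (s i : G) * g i) w = c} ≤ Γ := by
    intro g c
    calc Nat.card {s : Fin d → N // FreeGroup.lift (fun i => (s i : G) * g i) w = c}
        ≤ ⨆ c : G, Nat.card {s : Fin d → N // FreeGroup.lift (fun i => (s i : G) * g i) w = c} :=
          le_ciSup (hbddΓin g) c
      _ ≤ Γ := le_ciSup (f := fun g : Fin d → G => ⨆ c : G,
          Nat.card {s : Fin d → N // FreeGroup.lift (fun i => (s i : G) * g i) w = c})
          ((Set.finite_range _).bddAbove) g
  -- the sigma decomposition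
  have key : Nat.card {f : Fin d → G // FreeGroup.lift f w = c} =
      ∑ q : Fin d → G ⧸ N, Nat.card {f : {f : Fin d → G // FreeGroup.lift f w = c} //
        (fun i => φ (f.1 i)) = q} := by
    rw [Nat.card_eq_fintype_card, ← Fintype.card_congr
      (Equiv.sigmaFiberEquiv (fun f : {f : Fin d → G // FreeGroup.lift f w = c} =>
        fun i => φ (f.1 i))), Fintype.card_sigma]
    simp [Nat.card_eq_fintype_card]
  rw [key]
  -- bound each summand
  have hbound : ∀ q : Fin d → G ⧸ N,
      Nat.card {f : {f : Fin d → G // FreeGroup.lift f w = c} // (fun i => φ (f.1 i)) = q} ≤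
        if FreeGroup.lift q w = φ c then Γ else 0 := by
    intro q
    by_cases hq : FreeGroup.lift q w = φ c
    · rw [if_pos hq]
      set g : Fin d → G := fun i => (q i).out with hg
      refine le_trans ?_ (hΓle g c)
      refine Nat.card_le_card_of_injective
        (fun f => ⟨fun i => ⟨f.1.1 i * (g i)⁻¹, ?_⟩, ?_⟩) ?_
      · have : φ (f.1.1 i) = q i := congrFun f.2 i
        have hgi : φ (g i) = q i := Quotient.out_eq _
        have : (g i)⁻¹ * f.1.1 i ∈ N := by
          rw [← QuotientGroup.eq]
          exact hgi.trans this.symm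
        simpa using (Subgroup.Normal.mem_comm ‹N.Normal› this)
      · simp only [inv_mul_cancel_right]
        exact f.1.2
      · intro a b hab
        ext i
        have := congrArg (fun s => ((s.1 i : N) : G)) hab
        simpa using mul_right_cancel (b := (g i)⁻¹) (by simpa using this)
    · rw [if_neg hq]
      rw [Nat.le_zero, Nat.card_eq_zero]
      left
      constructor
      intro f
      apply hq
      rw [← f.2]
      rw [lift_comp φ f.1.1 w, f.1.2]
  calc ∑ q : Fin d → G ⧸ N, Nat.card {f : {f : Fin d → G // FreeGroup.lift f w = c} //
        (fun i => φ (f.1 i)) = q}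
      ≤ ∑ q : Fin d → G ⧸ N, if FreeGroup.lift q w = φ c then Γ else 0 :=
        Finset.sum_le_sum (fun q _ => hbound q)
    _ = (Finset.univ.filter (fun q : Fin d → G ⧸ N => FreeGroup.lift q w = φ c)).card * Γ := by
        rw [Finset.sum_ite, Finset.sum_const, Finset.sum_const_zero, add_zero, smul_eq_mul]
    _ ≤ Pi2 * Γ := by
        refine Nat.mul_le_mul_right _ ?_
        rw [← Fintype.card_subtype, ← Nat.card_eq_fintype_card]
        exact le_ciSup (f := fun c : G ⧸ N =>
          Nat.card {f : Fin d → G ⧸ N // FreeGroup.lift f w = c})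
          ((Set.finite_range _).bddAbove) (φ c)
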